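/- arXiv:2309.10224 — 5 statements merged into one kernel-verified Lean document; each statement's English description precedes it below -/
import Mathlib

section
/- Let G be a matching-covered graph with edge–perfect-matching incidence matrix A (rows indexed by edges, columns by perfect matchings, entry 1 if the edge is in the matching). If the linear system Ax = 1 (the all-ones vector) has a real solution x, then all tight cuts of G have the same size; in particular, since trivial cuts are tight, G is regular. -/
open Finset
open scoped Classical

/-- A multigraph: a type of vertices, a type of edges (parallel edges allowed),
and an assignment of an unordered pair of endpoints to each edge. -/
structure Multigraph (V E : Type) where
  ends : E → Sym2 V

namespace Multigraph

variable {V E : Type} [Fintype V] [Fintype E] (G : Multigraph V E)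

/-- The edge `e` is incident with the vertex `v`. -/
def Inc (e : E) (v : V) : Prop := v ∈ G.ends e

/-- The graph has no loops. -/
def Loopless : Prop := ∀ e : E, ¬ (G.ends e).IsDiag

/-- The degree of a vertex: the number of edges incident with it. -/
noncomputable def degree (v : V) : ℕ := (univ.filter fun e => G.Inc e v).card

/-- A perfect matching: a set of edges covering every vertex exactly once. -/
def IsPM (M : Finset E) : Prop := ∀ v : V, (M.filter fun e => G.Inc e v).card = 1

/-- The cut determined by a shore `S`: all edges with exactly one endpoint in `S`. -/
noncomputable def cut (S : Finset V) : Finset E :=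
  univ.filter fun e => ∃ u v : V, G.ends e = s(u, v) ∧ u ∈ S ∧ v ∉ S

/-- `S` is the shore of an odd cut. -/
def IsOddShore (_G : Multigraph V E) (S : Finset V) : Prop := Odd S.card ∧ Odd Sᶜ.card

/-- `S` is the shore of a tight cut: an odd cut meeting every perfect matching
in exactly one edge. -/
def IsTightShore (S : Finset V) : Prop :=
  G.IsOddShore S ∧ ∀ M : Finset E, G.IsPM M → (M ∩ G.cut S).card = 1

/-- The underlying simple graph of a multigraph. -/
def adj : SimpleGraph V := SimpleGraph.fromRel (fun u v => ∃ e : E, G.ends e = s(u, v))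

/-- A matching-covered graph: connected, with at least one edge, and every
edge lies in some perfect matching. -/
def MatchingCovered : Prop :=
  G.adj.Connected ∧ Nonempty E ∧ ∀ e : E, ∃ M : Finset E, G.IsPM M ∧ e ∈ M

/-- `G` is an `r`-graph: `r`-regular, loopless, and every odd cut has at least `r` edges. -/
def IsRGraph (r : ℕ) : Prop :=
  G.Loopless ∧ (∀ v : V, G.degree v = r) ∧
    ∀ S : Finset V, G.IsOddShore S → r ≤ (G.cut S).card

end Multigraph

open Multigraph in
/-- If the edge–perfect-matching system `Ax = 1` of a
matching-covered graph has a real solution, then all tight cuts have the same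
size; in particular `G` is regular. -/
theorem tight_cuts_same_size {V E : Type} [Fintype V] [Fintype E]
    (G : Multigraph V E) (hmc : G.MatchingCovered)
    (x : Finset E → ℝ)
    (hx : ∀ e : E,
      ∑ M ∈ univ.filter G.IsPM, (if e ∈ M then x M else 0) = 1) :
    (∀ S T : Finset V, G.IsTightShore S → G.IsTightShore T →
      (G.cut S).card = (G.cut T).card) ∧
    ∃ r : ℕ, ∀ v : V, G.degree v = r := by

  have key : ∀ F : Finset E, (∀ M : Finset E, G.IsPM M → (M ∩ F).card = 1) →
      (F.card : ℝ) = ∑ M ∈ univ.filter G.IsPM, x M := by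
    intro F hF
    calc (F.card : ℝ) = ∑ _e ∈ F, (1 : ℝ) := by simp
      _ = ∑ e ∈ F, ∑ M ∈ univ.filter G.IsPM, (if e ∈ M then x M else 0) :=
          sum_congr rfl fun e _ => (hx e).symm
      _ = ∑ M ∈ univ.filter G.IsPM, ∑ e ∈ F, (if e ∈ M then x M else 0) := sum_comm
      _ = ∑ M ∈ univ.filter G.IsPM, x M := by
          refine sum_congr rfl fun M hM => ?_
          have hM' : G.IsPM M := by simpa using hM
          rw [sum_ite, sum_const_zero, add_zero, sum_const]
          have : F.filter (· ∈ M) = M ∩ F := by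
            ext e; simp [Finset.mem_inter, and_comm]
          rw [this, hF M hM', one_smul]
  constructor
  · intro S T hS hT
    have h1 := key (G.cut S) (fun M hM => hS.2 M hM)
    have h2 := key (G.cut T) (fun M hM => hT.2 M hM)
    exact_mod_cast h1.trans h2.symm
  · have hdeg : ∀ v : V, ((G.degree v : ℝ)) = ∑ M ∈ univ.filter G.IsPM, x M := by
      intro v
      refine key (univ.filter fun e => G.Inc e v) (fun M hM => ?_)
      have : M ∩ univ.filter (fun e => G.Inc e v) = M.filter fun e => G.Inc e v := by
        ext e; simp [Finset.mem_inter, and_comm]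
      rw [this, hM v]
    by_cases hV : Nonempty V
    · obtain ⟨v₀⟩ := hV
      exact ⟨G.degree v₀, fun v => by
        have := (hdeg v).trans (hdeg v₀).symm; exact_mod_cast this⟩
    · exact ⟨0, fun v => absurd ⟨v⟩ hV⟩
end

section
/- Let C be a tight cut of a matching-covered graph G with an edge e ∈ C. If M is a perfect matching of the contraction G₁ (obtained by contracting one shore of C to a single vertex) containing e, and N is a perfect matching of the contraction G₂ (obtained by contracting the other shore) containing e, then M ∪ N is a perfect matching of G. -/
open Finset
open scoped Classical

namespace Multigraph
variable {V E : Type} [Fintype V] [Fintype E] (G : Multigraph V E)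

/-- A perfect matching of the contraction of `G` obtained by contracting the
shore `Sᶜ` (so the vertices of the contraction are `S` plus one contracted
vertex), viewed as a set of edges of `G`: every edge has an endpoint in `S`,
every vertex of `S` is covered exactly once, and exactly one edge crosses the
cut (covering the contracted vertex). -/
noncomputable def IsContractionPM (S : Finset V) (M : Finset E) : Prop :=
  (∀ e ∈ M, ∃ v ∈ S, G.Inc e v) ∧
  (∀ v ∈ S, (M.filter fun e => G.Inc e v).card = 1) ∧
  (M ∩ G.cut S).card = 1

end Multigraph

open Multigraph in
/-- if `M` is a perfect matching of one tight-cut contraction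
containing the cut edge `e` and `N` is a perfect matching of the other
contraction containing `e`, then `M ∪ N` is a perfect matching of `G`. -/
theorem union_of_contraction_matchings {V E : Type} [Fintype V] [Fintype E]
    (G : Multigraph V E) (hmc : G.MatchingCovered)
    (S : Finset V) (hS : G.IsTightShore S)
    (e : E) (he : e ∈ G.cut S)
    (M N : Finset E)
    (hM : G.IsContractionPM S M) (heM : e ∈ M)
    (hN : G.IsContractionPM Sᶜ N) (heN : e ∈ N) :
    G.IsPM (M ∪ N) := by
  classical
  obtain ⟨hM1, hM2, hM3⟩ := hM
  obtain ⟨hN1, hN2, hN3⟩ := hN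
  have hcut : G.cut Sᶜ = G.cut S := by
    ext f
    simp only [Multigraph.cut, mem_filter, mem_univ, true_and, mem_compl]
    constructor
    · rintro ⟨u, v, h, hu, hv⟩
      exact ⟨v, u, by rw [h, Sym2.eq_swap], by simpa using hv, by simpa using hu⟩
    · rintro ⟨u, v, h, hu, hv⟩
      exact ⟨v, u, by rw [h, Sym2.eq_swap], by simpa using hv, by simpa using hu⟩
  rw [hcut] at hN3
  have hMe : M ∩ G.cut S = {e} := by
    obtain ⟨a, ha⟩ := Finset.card_eq_one.mp hM3
    rw [ha]
    have : e ∈ ({a} : Finset E) := ha ▸ Finset.mem_inter.mpr ⟨heM, he⟩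
    rw [Finset.mem_singleton.mp this]
  have hNe : N ∩ G.cut S = {e} := by
    obtain ⟨a, ha⟩ := Finset.card_eq_one.mp hN3
    rw [ha]
    have : e ∈ ({a} : Finset E) := ha ▸ Finset.mem_inter.mpr ⟨heN, he⟩
    rw [Finset.mem_singleton.mp this]
  intro v
  by_cases hv : v ∈ S
  · have hsub : (N.filter fun f => G.Inc f v) ⊆ M.filter fun f => G.Inc f v := by
      intro f hf
      rw [mem_filter] at hf
      obtain ⟨hfN, hfv⟩ := hf
      obtain ⟨w, hw, hwf⟩ := hN1 f hfN
      have hwS : w ∉ S := mem_compl.mp hw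
      have hvw : v ≠ w := fun h => hwS (h ▸ hv)
      have hends : G.ends f = s(v, w) :=
        (Sym2.mem_and_mem_iff hvw).mp ⟨hfv, hwf⟩
      have hfc : f ∈ G.cut S := by
        simp only [Multigraph.cut, mem_filter, mem_univ, true_and]
        exact ⟨v, w, hends, hv, hwS⟩
      have : f ∈ N ∩ G.cut S := Finset.mem_inter.mpr ⟨hfN, hfc⟩
      rw [hNe, Finset.mem_singleton] at this
      subst this
      exact mem_filter.mpr ⟨heM, hfv⟩
    rw [filter_union, Finset.union_eq_left.mpr hsub]
    exact hM2 v hv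
  · have hv' : v ∈ Sᶜ := mem_compl.mpr hv
    have hsub : (M.filter fun f => G.Inc f v) ⊆ N.filter fun f => G.Inc f v := by
      intro f hf
      rw [mem_filter] at hf
      obtain ⟨hfM, hfv⟩ := hf
      obtain ⟨w, hw, hwf⟩ := hM1 f hfM
      have hvw : w ≠ v := fun h => hv (h ▸ hw)
      have hends : G.ends f = s(w, v) :=
        (Sym2.mem_and_mem_iff hvw).mp ⟨hwf, hfv⟩
      have hfc : f ∈ G.cut S := by
        simp only [Multigraph.cut, mem_filter, mem_univ, true_and]
        exact ⟨w, v, hends, hw, hv⟩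
      have : f ∈ M ∩ G.cut S := Finset.mem_inter.mpr ⟨hfM, hfc⟩
      rw [hMe, Finset.mem_singleton] at this
      subst this
      exact mem_filter.mpr ⟨heN, hfv⟩
    rw [filter_union, Finset.union_eq_right.mpr hsub]
    exact hN2 v hv'
end

section
/- Let G be a matching-covered graph with tight cut C, contractions G₁, G₂ with incidence matrices A₁, A₂, and incidence matrix A. Suppose A₁y = 1 and A₂t = 1. For each e ∈ C, index the matchings of G₁ containing e by I^e with coefficients y_i and matchings of G₂ containing e by J^e with coefficients t_j. Define x on the matchings K^e_{ij} = M^e_i ∪ N^e_j of G by x^e_{ij} = y^e_i · t^e_j (and 0 on all other matchings). Then Ax = 1. -/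
open Finset
open scoped Classical

/-! Perfect matchings of `G` are exactly the unions `M ∪ N` of perfect matchings of the two
contractions that use the same cut edge. For an edge `e` with an end in `S` the sum thus splits as
`∑ M, [e ∈ M] y M * ∑ {N ∋ f_M}, t N`, with `f_M` the cut edge of `M`; the inner sum is `1` by
`A₂t = 1` at `f_M`, and then the outer one is `1` by `A₁y = 1` at `e`. Edges with an end in `Sᶜ`
are the same case with the two shores exchanged. -/

theorem Finset.inter_eq_singleton_iff_mem {α : Type*} [DecidableEq α] {s t : Finset α} {a : α}
    (hst : (s ∩ t).card = 1) (ha : a ∈ t) : s ∩ t = {a} ↔ a ∈ s := by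
  refine ⟨fun h => (mem_inter.mp (h ▸ mem_singleton_self a)).1, fun has => ?_⟩
  obtain ⟨b, hb⟩ := card_eq_one.mp hst
  have hab : a ∈ s ∩ t := mem_inter.mpr ⟨has, ha⟩
  rw [hb, mem_singleton] at hab
  rw [hb, hab]

namespace Multigraph

variable {V E : Type} {G : Multigraph V E} {S : Finset V}

theorem filter_filter_inc {T : Finset V} {v : V} (hv : v ∈ T) (K : Finset E) :
    ((K.filter fun f => ∃ v ∈ T, G.Inc f v).filter fun f => G.Inc f v) =
      K.filter fun f => G.Inc f v := by
  ext f
  simp only [mem_filter]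
  exact ⟨fun h => ⟨h.1.1, h.2⟩, fun h => ⟨⟨h.1, v, hv, h.2⟩, h.2⟩⟩

variable [Fintype V]

variable (G S) in
theorem exists_inc_or_exists_inc_compl (e : E) :
    (∃ v ∈ S, G.Inc e v) ∨ (∃ v ∈ Sᶜ, G.Inc e v) := by
  have hu : G.Inc e (G.ends e).out.1 := Sym2.out_fst_mem _
  by_cases huS : (G.ends e).out.1 ∈ S
  · exact Or.inl ⟨_, huS, hu⟩
  · exact Or.inr ⟨_, mem_compl.mpr huS, hu⟩

variable (G S) in
theorem filter_union_filter_compl (K : Finset E) :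
    (K.filter fun f => ∃ v ∈ S, G.Inc f v) ∪ (K.filter fun f => ∃ v ∈ Sᶜ, G.Inc f v) = K := by
  rw [← filter_or]
  exact filter_true_of_mem fun f _ => exists_inc_or_exists_inc_compl G S f

variable [Fintype E]

theorem mem_cut_iff {e : E} :
    e ∈ G.cut S ↔ (∃ v ∈ S, G.Inc e v) ∧ (∃ v ∈ Sᶜ, G.Inc e v) := by
  simp only [cut, mem_filter, mem_univ, true_and]
  constructor
  · rintro ⟨u, v, h, hu, hv⟩
    exact ⟨⟨u, hu, by simp [Inc, h]⟩, ⟨v, mem_compl.mpr hv, by simp [Inc, h]⟩⟩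
  · rintro ⟨⟨u, hu, hiu⟩, ⟨v, hv, hiv⟩⟩
    have huv : u ≠ v := by rintro rfl; exact mem_compl.mp hv hu
    exact ⟨u, v, (Sym2.mem_and_mem_iff huv).mp ⟨hiu, hiv⟩, hu, mem_compl.mp hv⟩

theorem cut_compl : G.cut Sᶜ = G.cut S := by
  ext e
  simp only [mem_cut_iff, compl_compl]
  tauto

theorem IsTightShore.compl (hS : G.IsTightShore S) : G.IsTightShore Sᶜ :=
  ⟨⟨by simpa using hS.1.2, by simpa using hS.1.1⟩, by simpa [cut_compl] using hS.2⟩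

theorem filter_inter_cut (T : Finset V) (K : Finset E) :
    (K.filter fun f => ∃ v ∈ T, G.Inc f v) ∩ G.cut T = K ∩ G.cut T := by
  ext f
  simp only [mem_inter, mem_filter, mem_cut_iff]
  tauto

theorem IsPM.isContractionPM_filter (hS : G.IsTightShore S) {K : Finset E} (hK : G.IsPM K) :
    G.IsContractionPM S (K.filter fun f => ∃ v ∈ S, G.Inc f v) :=
  ⟨fun _ hf => (mem_filter.mp hf).2, fun v hv => (filter_filter_inc hv K).symm ▸ hK v,
    (filter_inter_cut S K).symm ▸ hS.2 K hK⟩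

theorem mem_of_inter_cut_eq {M N : Finset E} (hN : ∀ f ∈ N, ∃ v ∈ Sᶜ, G.Inc f v)
    (h : M ∩ G.cut S = N ∩ G.cut S) {f : E} (hfN : f ∈ N) (hfS : ∃ v ∈ S, G.Inc f v) :
    f ∈ M := by
  have hf : f ∈ N ∩ G.cut S := mem_inter.mpr ⟨hfN, mem_cut_iff.mpr ⟨hfS, hN f hfN⟩⟩
  exact (mem_inter.mp (h ▸ hf)).1

theorem filter_union_of_inter_cut_eq {M N : Finset E} (hM : ∀ f ∈ M, ∃ v ∈ S, G.Inc f v)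
    (hN : ∀ f ∈ N, ∃ v ∈ Sᶜ, G.Inc f v) (h : M ∩ G.cut S = N ∩ G.cut S) :
    ((M ∪ N).filter fun f => ∃ v ∈ S, G.Inc f v) = M := by
  ext f
  simp only [mem_filter, mem_union]
  refine ⟨?_, fun hf => ⟨Or.inl hf, hM f hf⟩⟩
  rintro ⟨hf | hf, hfS⟩
  · exact hf
  · exact mem_of_inter_cut_eq hN h hf hfS

theorem filter_compl_union_of_inter_cut_eq {M N : Finset E} (hM : ∀ f ∈ M, ∃ v ∈ S, G.Inc f v)
    (hN : ∀ f ∈ N, ∃ v ∈ Sᶜ, G.Inc f v) (h : M ∩ G.cut S = N ∩ G.cut S) :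
    ((M ∪ N).filter fun f => ∃ v ∈ Sᶜ, G.Inc f v) = N := by
  rw [union_comm]
  exact filter_union_of_inter_cut_eq hN (by simpa using hM) (by rw [cut_compl, h])

theorem isPM_union {M N : Finset E} (hM : G.IsContractionPM S M) (hN : G.IsContractionPM Sᶜ N)
    (h : M ∩ G.cut S = N ∩ G.cut S) : G.IsPM (M ∪ N) := by
  intro v
  by_cases hv : v ∈ S
  · rw [← filter_filter_inc hv, filter_union_of_inter_cut_eq hM.1 hN.1 h]
    exact hM.2.1 v hv
  · rw [← filter_filter_inc (mem_compl.mpr hv), filter_compl_union_of_inter_cut_eq hM.1 hN.1 h]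
    exact hN.2.1 v (mem_compl.mpr hv)

theorem sum_isPM_eq_sum_inter_cut_eq {β : Type*} [AddCommMonoid β] (hS : G.IsTightShore S)
    (g : Finset E → Finset E → β) :
    ∑ K ∈ univ.filter G.IsPM,
        g (K.filter fun f => ∃ v ∈ S, G.Inc f v) (K.filter fun f => ∃ v ∈ Sᶜ, G.Inc f v) =
      ∑ M ∈ univ.filter (G.IsContractionPM S),
        ∑ N ∈ (univ.filter (G.IsContractionPM Sᶜ)).filter (M ∩ G.cut S = · ∩ G.cut S), g M N := by
  rw [← sum_finset_product' (((univ.filter (G.IsContractionPM S)) ×ˢ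
    (univ.filter (G.IsContractionPM Sᶜ))).filter fun p => p.1 ∩ G.cut S = p.2 ∩ G.cut S) _ _
    (by simp [and_assoc])]
  refine sum_nbij' (fun K => (K.filter fun f => ∃ v ∈ S, G.Inc f v,
      K.filter fun f => ∃ v ∈ Sᶜ, G.Inc f v)) (fun p => p.1 ∪ p.2) ?_ ?_ ?_ ?_ (fun _ _ => rfl)
  · intro K hK
    have hK := (mem_filter.mp hK).2
    simp only [mem_filter, mem_product, mem_univ, true_and]
    exact ⟨⟨hK.isContractionPM_filter hS, hK.isContractionPM_filter hS.compl⟩,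
      by rw [filter_inter_cut, ← cut_compl, filter_inter_cut]⟩
  · rintro ⟨M, N⟩ hp
    simp only [mem_filter, mem_product, mem_univ, true_and] at hp ⊢
    exact isPM_union hp.1.1 hp.1.2 hp.2
  · intro K _
    exact filter_union_filter_compl G S K
  · rintro ⟨M, N⟩ hp
    simp only [mem_filter, mem_product, mem_univ, true_and] at hp
    exact Prod.ext (filter_union_of_inter_cut_eq hp.1.1.1 hp.1.2.1 hp.2)
      (filter_compl_union_of_inter_cut_eq hp.1.1.1 hp.1.2.1 hp.2)

theorem sum_inter_cut_eq_eq_one {t : Finset E → ℝ}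
    (ht : ∀ e : E, (∃ v ∈ Sᶜ, G.Inc e v) →
      ∑ N ∈ univ.filter (G.IsContractionPM Sᶜ), (if e ∈ N then t N else 0) = 1)
    {M : Finset E} (hM : G.IsContractionPM S M) :
    ∑ N ∈ (univ.filter (G.IsContractionPM Sᶜ)).filter (M ∩ G.cut S = · ∩ G.cut S), t N = 1 := by
  obtain ⟨f, hf⟩ := card_eq_one.mp hM.2.2
  have hfC : f ∈ G.cut S := (mem_inter.mp (hf ▸ mem_singleton_self f)).2
  rw [sum_filter, ← ht f (mem_cut_iff.mp hfC).2]
  refine sum_congr rfl fun N hN => ?_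
  have hNC : (N ∩ G.cut S).card = 1 := cut_compl (G := G) ▸ (mem_filter.mp hN).2.2.2
  rw [hf]
  exact if_congr (eq_comm.trans (inter_eq_singleton_iff_mem hNC hfC)) rfl rfl

theorem sum_isPM_eq_one_of_exists_inc (hS : G.IsTightShore S) {y t : Finset E → ℝ}
    (ht : ∀ e : E, (∃ v ∈ Sᶜ, G.Inc e v) →
      ∑ N ∈ univ.filter (G.IsContractionPM Sᶜ), (if e ∈ N then t N else 0) = 1)
    {e : E} (heS : ∃ v ∈ S, G.Inc e v)
    (hy : ∑ M ∈ univ.filter (G.IsContractionPM S), (if e ∈ M then y M else 0) = 1) :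
    ∑ K ∈ univ.filter G.IsPM,
        (if e ∈ K then
          y (K.filter fun f => ∃ v ∈ S, G.Inc f v) * t (K.filter fun f => ∃ v ∈ Sᶜ, G.Inc f v)
        else 0) = 1 := by
  have hmem (K : Finset E) : e ∈ K ↔ e ∈ K.filter fun f => ∃ v ∈ S, G.Inc f v := by
    rw [mem_filter, and_iff_left heS]
  rw [sum_congr rfl fun K _ => if_congr (hmem K) rfl rfl,
    sum_isPM_eq_sum_inter_cut_eq hS (fun M N => if e ∈ M then y M * t N else 0), ← hy]
  refine sum_congr rfl fun M hM => ?_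
  split_ifs
  · rw [← mul_sum, sum_inter_cut_eq_eq_one ht (mem_filter.mp hM).2, mul_one]
  · exact sum_const_zero

end Multigraph

open Multigraph in
theorem product_combination_solves_general {V E : Type} [Fintype V] [Fintype E]
    (G : Multigraph V E)
    (S : Finset V) (hS : G.IsTightShore S)
    (y t : Finset E → ℝ)
    (hy : ∀ e : E, (∃ v ∈ S, G.Inc e v) →
      ∑ M ∈ univ.filter (G.IsContractionPM S), (if e ∈ M then y M else 0) = 1)
    (ht : ∀ e : E, (∃ v ∈ Sᶜ, G.Inc e v) →
      ∑ N ∈ univ.filter (G.IsContractionPM Sᶜ), (if e ∈ N then t N else 0) = 1) :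
    ∀ e : E,
      ∑ K ∈ univ.filter G.IsPM,
        (if e ∈ K then
          y (K.filter fun f => ∃ v ∈ S, G.Inc f v) *
          t (K.filter fun f => ∃ v ∈ Sᶜ, G.Inc f v)
        else 0) = 1 := by
  intro e
  rcases exists_inc_or_exists_inc_compl G S e with heS | heSc
  · exact sum_isPM_eq_one_of_exists_inc hS ht heS (hy e heS)
  · have h := sum_isPM_eq_one_of_exists_inc hS.compl (y := t) (t := y)
      (by simpa using hy) heSc (ht e heSc)
    simpa only [compl_compl, mul_comm] using h

open Multigraph in
/-- given solutions `y`, `t` of the systems `A₁y = 1`, `A₂t = 1`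
for the two tight-cut contractions of `G`, assigning to the perfect matching
`K = M ∪ N` of `G` (with `M`, `N` the restrictions of `K` to the two
contractions) the coefficient `y(M)·t(N)` yields a solution of `Ax = 1`. -/
theorem product_combination_solves {V E : Type} [Fintype V] [Fintype E]
    (G : Multigraph V E) (hmc : G.MatchingCovered)
    (S : Finset V) (hS : G.IsTightShore S)
    (y t : Finset E → ℝ)
    (hy : ∀ e : E, (∃ v ∈ S, G.Inc e v) →
      ∑ M ∈ univ.filter (G.IsContractionPM S), (if e ∈ M then y M else 0) = 1)
    (ht : ∀ e : E, (∃ v ∈ Sᶜ, G.Inc e v) →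
      ∑ N ∈ univ.filter (G.IsContractionPM Sᶜ), (if e ∈ N then t N else 0) = 1) :
    ∀ e : E,
      ∑ K ∈ univ.filter G.IsPM,
        (if e ∈ K then
          y (K.filter fun f => ∃ v ∈ S, G.Inc f v) *
          t (K.filter fun f => ∃ v ∈ Sᶜ, G.Inc f v)
        else 0) = 1 :=
  product_combination_solves_general G S hS y t hy ht
end

section
/- Every k-regular bipartite multigraph (k ≥ 1) has an edge set that decomposes into k pairwise disjoint perfect matchings. -/
open Finset
open scoped Classical

namespace Multigraph

/-- A bipartition of a multigraph: every edge has exactly one endpoint in `U`. -/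
def IsBipartition {V E : Type} [Fintype V] [Fintype E] (G : Multigraph V E)
    (U : Finset V) : Prop :=
  ∀ e : E, ∃ u v : V, G.ends e = s(u, v) ∧ u ∈ U ∧ v ∉ U

end Multigraph

/-!
Orient every edge from its end in `U` to its end outside `U`. In a `k`-regular bipartite graph
with `k > 0`, the edges leaving a set `A` of vertices on one side number `k * #A`; hence
`#U = #Uᶜ`, and the edges leaving `A ⊆ U` reach at least `#A` vertices, so Hall's theorem gives
a perfect matching. Deleting it leaves a `(k - 1)`-regular bipartite graph, and induction on `k`
splits the edges into `k` perfect matchings.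
-/

theorem Finset.card_filter_mem_eq_card_mul {α β : Type*} {f : α → β} {s : Finset α}
    {t : Finset β} {k : ℕ} (h : ∀ b ∈ t, #{a ∈ s | f a = b} = k) :
    #{a ∈ s | f a ∈ t} = #t * k := by
  rw [card_eq_sum_card_fiberwise (s := {a ∈ s | f a ∈ t}) fun a ha => (mem_filter.1 ha).2]
  refine sum_const_nat fun b hb => ?_
  rw [filter_filter, ← h b hb]
  congr 1
  exact filter_congr fun a _ => ⟨And.right, fun hab => ⟨hab ▸ hb, hab⟩⟩

namespace Multigraph

variable {V E : Type} {G : Multigraph V E}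

/-- `G.IsPM M` is `G.IsFactor M 1` by definition. -/
def IsFactor (G : Multigraph V E) (F : Finset E) (k : ℕ) : Prop :=
  ∀ v : V, #(F.filter fun e => G.Inc e v) = k

theorem IsFactor.eq_empty {F : Finset E} (hF : G.IsFactor F 0) : F = ∅ := by
  refine eq_empty_of_forall_notMem fun e he => ?_
  have hv : e ∈ F.filter fun e' => G.Inc e' (G.ends e).out.1 :=
    mem_filter.2 ⟨he, (G.ends e).out_fst_mem⟩
  rw [card_eq_zero.1 (hF _)] at hv
  exact notMem_empty e hv

theorem IsFactor.sdiff {F M : Finset E} {a b : ℕ} (hF : G.IsFactor F a) (hM : G.IsFactor M b)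
    (hMF : M ⊆ F) : G.IsFactor (F \ M) (a - b) := by
  intro v
  have hfilter : (F \ M).filter (G.Inc · v) = F.filter (G.Inc · v) \ M.filter (G.Inc · v) := by
    ext e
    simp only [mem_filter, mem_sdiff]
    tauto
  rw [hfilter, card_sdiff_of_subset (filter_subset_filter _ hMF), hF v, hM v]

namespace IsBipartition

variable [Fintype V] [Fintype E] {U : Finset V} {F : Finset E} {k : ℕ}

noncomputable def src (hG : G.IsBipartition U) (e : E) : V := (hG e).choose

noncomputable def tgt (hG : G.IsBipartition U) (e : E) : V := (hG e).choose_spec.choose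

theorem ends_eq (hG : G.IsBipartition U) (e : E) : G.ends e = s(hG.src e, hG.tgt e) :=
  (hG e).choose_spec.choose_spec.1

theorem src_mem (hG : G.IsBipartition U) (e : E) : hG.src e ∈ U :=
  (hG e).choose_spec.choose_spec.2.1

theorem tgt_notMem (hG : G.IsBipartition U) (e : E) : hG.tgt e ∉ U :=
  (hG e).choose_spec.choose_spec.2.2

theorem inc_iff_src_eq (hG : G.IsBipartition U) {e : E} {v : V} (hv : v ∈ U) :
    G.Inc e v ↔ hG.src e = v := by
  rw [Inc, hG.ends_eq, Sym2.mem_iff]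
  exact ⟨fun h => (h.resolve_right fun h' => hG.tgt_notMem e (h' ▸ hv)).symm,
    fun h => .inl h.symm⟩

theorem inc_iff_tgt_eq (hG : G.IsBipartition U) {e : E} {v : V} (hv : v ∉ U) :
    G.Inc e v ↔ hG.tgt e = v := by
  rw [Inc, hG.ends_eq, Sym2.mem_iff]
  exact ⟨fun h => (h.resolve_left fun h' => hv (h' ▸ hG.src_mem e)).symm,
    fun h => .inr h.symm⟩

theorem card_filter_src_mem (hG : G.IsBipartition U) (hF : G.IsFactor F k) {A : Finset V}
    (hA : A ⊆ U) : #{e ∈ F | hG.src e ∈ A} = #A * k :=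
  card_filter_mem_eq_card_mul fun a ha => by simpa only [hG.inc_iff_src_eq (hA ha)] using hF a

theorem card_filter_tgt_mem (hG : G.IsBipartition U) (hF : G.IsFactor F k) {A : Finset V}
    (hA : A ⊆ Uᶜ) : #{e ∈ F | hG.tgt e ∈ A} = #A * k :=
  card_filter_mem_eq_card_mul fun a ha => by
    simpa only [hG.inc_iff_tgt_eq (mem_compl.1 (hA ha))] using hF a

theorem card_eq_card_compl (hG : G.IsBipartition U) (hF : G.IsFactor F k) (hk : 0 < k) :
    #U = #Uᶜ := by
  refine Nat.eq_of_mul_eq_mul_right hk ?_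
  calc #U * k = #{e ∈ F | hG.src e ∈ U} := (hG.card_filter_src_mem hF subset_rfl).symm
    _ = #F := by rw [filter_true_of_mem fun e _ => hG.src_mem e]
    _ = #{e ∈ F | hG.tgt e ∈ Uᶜ} := by
      rw [filter_true_of_mem fun e _ => mem_compl.2 (hG.tgt_notMem e)]
    _ = #Uᶜ * k := hG.card_filter_tgt_mem hF subset_rfl

theorem card_le_card_biUnion_image_tgt (hG : G.IsBipartition U) (hF : G.IsFactor F k)
    (hk : 0 < k) (s : Finset U) :
    #s ≤ #(s.biUnion fun u => {e ∈ F | hG.src e = u}.image hG.tgt) := by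
  set N := s.biUnion fun u => {e ∈ F | hG.src e = u}.image hG.tgt
  set A := s.map (Function.Embedding.subtype (· ∈ U))
  have hAU : A ⊆ U := by
    intro v hv
    obtain ⟨u, -, rfl⟩ := mem_map.1 hv
    exact u.2
  have hNU : N ⊆ Uᶜ := by
    simp only [N, biUnion_subset, image_subset_iff]
    exact fun _ _ e _ => mem_compl.2 (hG.tgt_notMem e)
  have hAN : {e ∈ F | hG.src e ∈ A} ⊆ {e ∈ F | hG.tgt e ∈ N} := by
    refine monotone_filter_right _ fun e he heA => ?_
    obtain ⟨u, hu, hue⟩ := mem_map.1 heA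
    exact mem_biUnion.2 ⟨u, hu, mem_image.2 ⟨e, mem_filter.2 ⟨he, hue.symm⟩, rfl⟩⟩
  refine Nat.le_of_mul_le_mul_right ?_ hk
  calc #s * k = #A * k := by rw [card_map]
    _ = #{e ∈ F | hG.src e ∈ A} := (hG.card_filter_src_mem hF hAU).symm
    _ ≤ #{e ∈ F | hG.tgt e ∈ N} := card_le_card hAN
    _ = #N * k := hG.card_filter_tgt_mem hF hNU

theorem isPM_image (hG : G.IsBipartition U) (ed : U → E) (hsrc : ∀ u, hG.src (ed u) = u)
    (htgt : Function.Injective (hG.tgt ∘ ed)) (hcard : #Uᶜ ≤ #U) :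
    G.IsPM (univ.image ed) := by
  intro v
  suffices ∃ u, ∀ e, (∃ u', ed u' = e) ∧ G.Inc e v ↔ e = ed u by
    obtain ⟨u, hu⟩ := this
    refine card_eq_one.2 ⟨ed u, ext fun e => ?_⟩
    simpa only [mem_filter, mem_image, mem_univ, true_and, mem_singleton] using hu e
  by_cases hv : v ∈ U
  · refine ⟨⟨v, hv⟩, fun e => ?_⟩
    simp only [hG.inc_iff_src_eq hv]
    constructor
    · rintro ⟨⟨u, rfl⟩, hu⟩
      rw [hsrc] at hu
      subst hu
      rfl
    · rintro rfl
      exact ⟨⟨_, rfl⟩, hsrc _⟩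
  · obtain ⟨u, -, hu⟩ := surjOn_of_injOn_of_card_le (s := univ) (t := Uᶜ) (hG.tgt ∘ ed)
      (fun u _ => mem_compl.2 (hG.tgt_notMem _)) htgt.injOn
      (by rwa [card_univ, Fintype.card_coe]) (mem_compl.2 hv)
    refine ⟨u, fun e => ?_⟩
    simp only [hG.inc_iff_tgt_eq hv]
    constructor
    · rintro ⟨⟨u', rfl⟩, hu'⟩
      rw [htgt (hu'.trans hu.symm)]
    · rintro rfl
      exact ⟨⟨_, rfl⟩, hu⟩

theorem exists_isPM_subset (hG : G.IsBipartition U) (hF : G.IsFactor F k) (hk : 0 < k) :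
    ∃ M ⊆ F, G.IsPM M := by
  obtain ⟨g, hg, hgN⟩ := (all_card_le_biUnion_card_iff_exists_injective _).1
    (hG.card_le_card_biUnion_image_tgt hF hk)
  simp only [mem_image, mem_filter] at hgN
  choose ed hed htgt using hgN
  refine ⟨univ.image ed, ?_, hG.isPM_image ed (fun u => (hed u).2) ?_
    (hG.card_eq_card_compl hF hk).ge⟩
  · simpa only [image_subset_iff, mem_univ, true_implies] using fun u => (hed u).1
  · simpa only [Function.comp_def, htgt] using hg

theorem exists_isPM_decomposition (hG : G.IsBipartition U) :
    ∀ (k : ℕ) {F : Finset E}, G.IsFactor F k → ∃ f : Fin k → Finset E,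
      (∀ i, G.IsPM (f i)) ∧ Pairwise (fun i j => Disjoint (f i) (f j)) ∧
        (∀ i, f i ⊆ F) ∧ ∀ e ∈ F, ∃ i, e ∈ f i
  | 0, F, hF => ⟨Fin.elim0, nofun, nofun, nofun, by simp [hF.eq_empty]⟩
  | k + 1, F, hF => by
    obtain ⟨M, hMF, hM⟩ := hG.exists_isPM_subset hF k.succ_pos
    obtain ⟨f, hf, hdisj, hsub, hcov⟩ := hG.exists_isPM_decomposition k (hF.sdiff hM hMF)
    refine ⟨Fin.cons M f, Fin.cases hM hf, ?_, Fin.cases hMF fun i => (hsub i).trans sdiff_subset,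
      fun e he => ?_⟩
    · exact pairwise_fin_succ_iff_of_isSymm.2
        ⟨fun j => disjoint_of_subset_right (hsub j) disjoint_sdiff, hdisj⟩
    · by_cases heM : e ∈ M
      · exact ⟨0, heM⟩
      · obtain ⟨i, hi⟩ := hcov e (mem_sdiff.2 ⟨he, heM⟩)
        exact ⟨i.succ, hi⟩

end IsBipartition

end Multigraph

open Multigraph in
theorem regular_bipartite_decomposition_general {V E : Type} [Fintype V] [Fintype E]
    (G : Multigraph V E) (U : Finset V) (hbip : G.IsBipartition U)
    (k : ℕ) (hreg : ∀ v : V, G.degree v = k) :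
    ∃ f : Fin k → Finset E,
      (∀ i, G.IsPM (f i)) ∧
      (∀ i j, i ≠ j → Disjoint (f i) (f j)) ∧
      (∀ e : E, ∃ i, e ∈ f i) := by
  obtain ⟨f, hf, hdisj, -, hcov⟩ := hbip.exists_isPM_decomposition k (F := univ) hreg
  exact ⟨f, hf, fun _ _ hij => hdisj hij, fun e => hcov e (mem_univ e)⟩

open Multigraph in
/-- every `k`-regular bipartite multigraph (`k ≥ 1`) decomposes
into `k` pairwise disjoint perfect matchings covering all edges. -/
theorem regular_bipartite_decomposition {V E : Type} [Fintype V] [Fintype E]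
    (G : Multigraph V E) (U : Finset V) (hbip : G.IsBipartition U)
    (k : ℕ) (hk : 1 ≤ k) (hreg : ∀ v : V, G.degree v = k) :
    ∃ f : Fin k → Finset E,
      (∀ i, G.IsPM (f i)) ∧
      (∀ i j, i ≠ j → Disjoint (f i) (f j)) ∧
      (∀ e : E, ∃ i, e ∈ f i) :=
  regular_bipartite_decomposition_general G U hbip k hreg
end

section
/- Let c = Σ_{i=1}^{6} α_i M_i be an edge-weighting of the Petersen graph written in the basis of its six perfect matchings, and suppose all entries of c are positive integers. Then either all α_i are integers or all α_i are half-integers (α_i ∈ 1/2 + Z), and in both cases all α_i ≥ 0, provided additionally that every odd cut of the weighted graph has weight at least r, where r is the common weighted vertex degree. -/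
open Finset
open scoped Classical

/-- The vertices of the Petersen graph: 2-element subsets of a 5-element set. -/
abbrev PetersenV := {s : Finset (Fin 5) // s.card = 2}

/-- The Petersen graph, realized as the Kneser graph `K(5,2)`:
2-element subsets of `{1,…,5}`, adjacent iff disjoint. -/
def Petersen : SimpleGraph PetersenV where
  Adj a b := Disjoint a.1 b.1 ∧ a ≠ b
  symm := ⟨fun a b h => ⟨h.1.symm, Ne.symm h.2⟩⟩
  loopless := ⟨fun a h => h.2 rfl⟩

/-- The edges of the Petersen graph. -/
abbrev PetersenE := {e : Sym2 PetersenV // e ∈ Petersen.edgeSet}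

/-- A perfect matching of a simple graph, as a finite set of edges covering
every vertex exactly once. -/
def SimpleGraph.IsPMFinset {V : Type} [Fintype V] (G : SimpleGraph V)
    (M : Finset (Sym2 V)) : Prop :=
  (∀ e ∈ M, e ∈ G.edgeSet) ∧ ∀ v : V, (M.filter fun e => v ∈ e).card = 1

/-- The 0,1 indicator vector (indexed by the 15 edges of the Petersen graph)
of a set of edges. -/
noncomputable def ind (M : Finset (Sym2 PetersenV)) : PetersenE → ℝ :=
  fun e => if e.1 ∈ M then 1 else 0

/-- The weighted degree of the edge-weighting `c` at the vertex `v`. -/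
noncomputable def wdeg (c : PetersenE → ℝ) (v : PetersenV) : ℝ :=
  ∑ e : PetersenE, if v ∈ e.1 then c e else 0

/-!
Each perfect matching of the Petersen graph is the set of edges leaving a 5-cycle, i.e. an odd
cut, and meets each of the other five matchings in exactly one edge. Writing `r = Σ α_N` for the
common degree, the odd-cut condition for the side of `M` reads `5 α_M + Σ_{N ≠ M} α_N ≥ r`,
i.e. `α_M ≥ 0`. The edge shared by `M ≠ N` lies in no third matching, so its weight is
`α_M + α_N ∈ ℤ`; comparing three matchings pairwise gives `2 α_M ∈ ℤ`, and then all `α` lie in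
the same coset of `ℤ`.
-/

theorem SimpleGraph.IsPMFinset.two_mul_card {V : Type} [Fintype V] {G : SimpleGraph V}
    {M : Finset (Sym2 V)} (hM : G.IsPMFinset M) : 2 * #M = Fintype.card V := by
  have hcount := sum_card_bipartiteAbove_eq_sum_card_bipartiteBelow
    (s := (univ : Finset V)) (t := M) (r := fun v e => v ∈ e)
  have hedge : ∀ e ∈ M, #((univ : Finset V).bipartiteBelow (fun v e => v ∈ e) e) = 2 := by
    intro e he
    rw [← Sym2.card_toFinset_of_not_isDiag e (G.not_isDiag_of_mem_edgeSet (hM.1 e he))]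
    congr 1
    ext v
    simp [bipartiteBelow, Sym2.mem_toFinset]
  simp only [bipartiteAbove, hM.2, sum_const, card_univ, smul_eq_mul, mul_one] at hcount
  rw [hcount, sum_congr rfl hedge, sum_const, smul_eq_mul, mul_comm]

theorem Finset.sum_sum_mul_ite_mem {α ι R : Type*} [Fintype ι] [DecidableEq α] [Semiring R]
    (s : Finset α) (P : ι → Finset α) (β : ι → R) :
    ∑ x ∈ s, ∑ i, β i * (if x ∈ P i then 1 else 0) = ∑ i, β i * #(s ∩ P i) := by
  rw [sum_comm]
  refine sum_congr rfl fun i _ => ?_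
  rw [← mul_sum, sum_boole, filter_mem_eq_inter]

theorem int_or_half_int_of_add_int {ι : Type*} {β : ι → ℝ} {i j k : ι}
    (hij : i ≠ j) (hik : i ≠ k) (hjk : j ≠ k) (hβ : ∀ a b, a ≠ b → ∃ n : ℤ, β a + β b = n) :
    (∀ a, ∃ n : ℤ, β a = n) ∨ (∀ a, ∃ n : ℤ, β a = n + 1 / 2) := by
  obtain ⟨m, hm⟩ : ∃ m : ℤ, 2 * β i = m := by
    obtain ⟨p, hp⟩ := hβ i j hij
    obtain ⟨q, hq⟩ := hβ i k hik
    obtain ⟨s, hs⟩ := hβ j k hjk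
    exact ⟨p + q - s, by push_cast; linarith⟩
  have hcoset : ∀ a, ∃ n : ℤ, β a = n - β i := fun a => by
    by_cases ha : a = i
    · exact ⟨m, by subst ha; linarith⟩
    · obtain ⟨n, hn⟩ := hβ a i ha
      exact ⟨n, by linarith⟩
  rcases Int.even_or_odd' m with ⟨t, rfl | rfl⟩
  · refine Or.inl fun a => ?_
    obtain ⟨n, hn⟩ := hcoset a
    exact ⟨n - t, by push_cast at hm ⊢; linarith⟩
  · refine Or.inr fun a => ?_
    obtain ⟨n, hn⟩ := hcoset a
    exact ⟨n - t - 1, by push_cast at hm ⊢; linarith⟩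

section PetersenData

local instance : DecidableRel Petersen.Adj := fun a b =>
  decidable_of_iff (Disjoint a.1 b.1 ∧ a ≠ b) Iff.rfl

def petersenEdges : Finset (Sym2 PetersenV) := univ.filter (· ∈ Petersen.edgeSet)

theorem mem_petersenEdges {x : Sym2 PetersenV} : x ∈ petersenEdges ↔ x ∈ Petersen.edgeSet := by
  simp [petersenEdges]

end PetersenData

def petersenCut (S : Finset PetersenV) : Finset (Sym2 PetersenV) :=
  petersenEdges.filter fun x => ∃ u v, x = s(u, v) ∧ u ∈ S ∧ v ∉ S

/-- As vertices of `K(5,2)`, the edges of the pentagon of `K₅` with cyclic order `p` form a 5-cycle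
of the Petersen graph. -/
def pentagon (p : Fin 5 → Fin 5) : Finset PetersenV :=
  univ.filter fun x => ∃ k : Fin 5, x.1 = {p k, p (k + 1)}

/-- The six pentagons of `K₅` through the edge `{0, 1}`, one from each complementary pair. -/
def petersenSide (i : Fin 6) : Finset PetersenV :=
  pentagon (![![0, 1, 2, 3, 4], ![0, 1, 2, 4, 3], ![0, 1, 3, 2, 4],
    ![0, 1, 3, 4, 2], ![0, 1, 4, 2, 3], ![0, 1, 4, 3, 2]] i)

def petersenMatching (i : Fin 6) : Finset (Sym2 PetersenV) := petersenCut (petersenSide i)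

theorem odd_card_petersenSide (i : Fin 6) :
    Odd #(petersenSide i) ∧ Odd #(petersenSide i)ᶜ := by
  revert i; decide

theorem isPMFinset_petersenMatching (i : Fin 6) : Petersen.IsPMFinset (petersenMatching i) := by
  refine ⟨fun x hx => mem_petersenEdges.1 (filter_subset _ _ hx), fun v => ?_⟩
  rw [filter_congr_decidable]
  revert i v; decide

theorem card_petersenMatching_inter (i j : Fin 6) :
    #(petersenMatching i ∩ petersenMatching j) = if i = j then 5 else 1 := by
  revert i j; decide

theorem petersenMatching_inter_inter {i j k : Fin 6} (hij : i ≠ j) (hik : i ≠ k) (hjk : j ≠ k) :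
    petersenMatching i ∩ petersenMatching j ∩ petersenMatching k = ∅ := by
  revert i j k; decide

set_option maxRecDepth 100000 in
theorem exists_eq_petersenMatching {M : Finset (Sym2 PetersenV)} (hM : Petersen.IsPMFinset M) :
    ∃ i, M = petersenMatching i := by
  have hcard : #M = 5 := by
    have := hM.two_mul_card
    rw [show Fintype.card PetersenV = 10 by decide] at this
    omega
  have hsub : M ⊆ petersenEdges := fun x hx => mem_petersenEdges.2 (hM.1 x hx)
  -- `decide` times out on these 3003 candidates; `rfl` against the explicit instance does not.
  have hsearch : ∀ M ∈ petersenEdges.powersetCard 5,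
      (∀ v : PetersenV, #(M.filter (v ∈ ·)) = 1) → ∃ i, M = petersenMatching i :=
    @of_decide_eq_true _ Finset.decidableDforallFinset rfl
  exact hsearch M (mem_powersetCard.2 ⟨hsub, hcard⟩) fun v => by convert hM.2 v

theorem petersenMatching_injective : Function.Injective petersenMatching := by
  decide

theorem card_inter_of_isPMFinset {M N : Finset (Sym2 PetersenV)} (hM : Petersen.IsPMFinset M)
    (hN : Petersen.IsPMFinset N) : #(M ∩ N) = if M = N then 5 else 1 := by
  obtain ⟨i, rfl⟩ := exists_eq_petersenMatching hM
  obtain ⟨j, rfl⟩ := exists_eq_petersenMatching hN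
  simp only [card_petersenMatching_inter, petersenMatching_injective.eq_iff]

theorem eq_or_eq_of_mem_inter {M N K : Finset (Sym2 PetersenV)} (hM : Petersen.IsPMFinset M)
    (hN : Petersen.IsPMFinset N) (hK : Petersen.IsPMFinset K) (hMN : M ≠ N)
    {x : Sym2 PetersenV} (hx : x ∈ M ∩ N) (hxK : x ∈ K) : K = M ∨ K = N := by
  obtain ⟨i, rfl⟩ := exists_eq_petersenMatching hM
  obtain ⟨j, rfl⟩ := exists_eq_petersenMatching hN
  obtain ⟨k, rfl⟩ := exists_eq_petersenMatching hK
  by_contra! hne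
  have hempty := petersenMatching_inter_inter (i := i) (j := j) (k := k) (ne_of_apply_ne _ hMN)
    (fun h => hne.1 (h ▸ rfl)) (fun h => hne.2 (h ▸ rfl))
  exact (eq_empty_iff_forall_notMem.1 hempty) x (mem_inter.2 ⟨hx, hxK⟩)

theorem exists_odd_cut_eq {M : Finset (Sym2 PetersenV)} (hM : Petersen.IsPMFinset M) :
    ∃ S : Finset PetersenV, Odd #S ∧ Odd #Sᶜ ∧ petersenCut S = M := by
  obtain ⟨i, rfl⟩ := exists_eq_petersenMatching hM
  exact ⟨petersenSide i, (odd_card_petersenSide i).1, (odd_card_petersenSide i).2, rfl⟩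

section Weighting

variable {α : {M : Finset (Sym2 PetersenV) // Petersen.IsPMFinset M} → ℝ} {c : PetersenE → ℝ}

theorem sum_ite_eq_sum_mul_card (hc : ∀ e : PetersenE, c e = ∑ M, α M * ind M.1 e)
    (p : Sym2 PetersenV → Prop) [DecidablePred p] :
    ∑ e : PetersenE, (if p e.1 then c e else 0) = ∑ M, α M * #(petersenEdges.filter p ∩ M.1) := by
  simp only [hc, ind]
  rw [← sum_subtype petersenEdges (fun _ => mem_petersenEdges)
    (fun x => if p x then ∑ M, α M * (if x ∈ M.1 then 1 else 0) else 0), ← sum_filter,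
    sum_sum_mul_ite_mem]

theorem wdeg_eq_sum (hc : ∀ e : PetersenE, c e = ∑ M, α M * ind M.1 e) (v : PetersenV) :
    wdeg c v = ∑ M, α M := by
  rw [wdeg, sum_ite_eq_sum_mul_card hc (v ∈ ·)]
  refine sum_congr rfl fun M _ => ?_
  have hsub : M.1 ⊆ petersenEdges := fun x hx => mem_petersenEdges.2 (M.2.1 x hx)
  have hcard : #(M.1.filter (v ∈ ·)) = 1 := by convert M.2.2 v
  rw [filter_inter, inter_eq_right.2 hsub, hcard, Nat.cast_one, mul_one]

theorem sum_cut_eq (hc : ∀ e : PetersenE, c e = ∑ M, α M * ind M.1 e) (M) {S : Finset PetersenV}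
    (hS : petersenCut S = M.1) :
    ∑ e : PetersenE, (if ∃ u v : PetersenV, e.1 = s(u, v) ∧ u ∈ S ∧ v ∉ S then c e else 0) =
      4 * α M + ∑ N, α N := by
  rw [sum_ite_eq_sum_mul_card hc fun x => ∃ u v : PetersenV, x = s(u, v) ∧ u ∈ S ∧ v ∉ S]
  change ∑ N, α N * #(petersenCut S ∩ N.1) = _
  rw [hS]
  calc ∑ N, α N * #(M.1 ∩ N.1) = ∑ N, (α N + if M = N then 4 * α N else 0) := by
        refine sum_congr rfl fun N _ => ?_
        simp only [card_inter_of_isPMFinset M.2 N.2, ← Subtype.ext_iff]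
        split_ifs <;> push_cast <;> ring
    _ = 4 * α M + ∑ N, α N := by rw [sum_add_distrib, sum_ite_eq, if_pos (mem_univ _), add_comm]

theorem exists_weight_eq_add (hc : ∀ e : PetersenE, c e = ∑ M, α M * ind M.1 e) {M N}
    (hMN : M ≠ N) : ∃ e : PetersenE, c e = α M + α N := by
  have hMN' : M.1 ≠ N.1 := fun h => hMN (Subtype.ext h)
  obtain ⟨x, hx⟩ : (M.1 ∩ N.1).Nonempty := by
    rw [← card_pos, card_inter_of_isPMFinset M.2 N.2, if_neg hMN']
    exact one_pos
  refine ⟨⟨x, M.2.1 x (mem_inter.1 hx).1⟩, ?_⟩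
  rw [hc, Fintype.sum_eq_add M N hMN]
  · simp [ind, (mem_inter.1 hx).1, (mem_inter.1 hx).2]
  · rintro K ⟨hKM, hKN⟩
    have hxK : x ∉ K.1 := fun hxK => by
      rcases eq_or_eq_of_mem_inter M.2 N.2 K.2 hMN' hx hxK with h | h
      exacts [hKM (Subtype.ext h), hKN (Subtype.ext h)]
    simp [ind, hxK]

end Weighting

/-- if an edge-weighting of the Petersen graph written as
`c = Σ α_i M_i` over the six perfect matchings has all entries positive
integers, and every odd cut of the weighted graph has weight at least the
common weighted degree `r`, then all `α_i` are nonnegative and either all are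
integers or all are half-integers. -/
theorem petersen_coefficients_half_integral
    (α : {M : Finset (Sym2 PetersenV) // Petersen.IsPMFinset M} → ℝ)
    (c : PetersenE → ℝ)
    (hc : ∀ e : PetersenE, c e = ∑ M, α M * ind M.1 e)
    (hpos : ∀ e : PetersenE, ∃ k : ℕ, 0 < k ∧ c e = (k : ℝ))
    (r : ℝ) (hr : ∀ v : PetersenV, wdeg c v = r)
    (hodd : ∀ S : Finset PetersenV, Odd S.card → Odd Sᶜ.card →
      r ≤ ∑ e : PetersenE,
        (if ∃ u v : PetersenV, e.1 = s(u, v) ∧ u ∈ S ∧ v ∉ S then c e else 0)) :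
    (∀ M, 0 ≤ α M) ∧
    ((∀ M, ∃ k : ℤ, α M = (k : ℝ)) ∨ (∀ M, ∃ k : ℤ, α M = (k : ℝ) + 1/2)) := by
  have hr_eq : r = ∑ M, α M := (hr ⟨{0, 1}, by decide⟩).symm.trans (wdeg_eq_sum hc _)
  have hnonneg : ∀ M, 0 ≤ α M := fun M => by
    obtain ⟨S, hS, hSc, hcut⟩ := exists_odd_cut_eq M.2
    have := hodd S hS hSc
    rw [sum_cut_eq hc M hcut] at this
    linarith
  have hpair : ∀ M N, M ≠ N → ∃ k : ℤ, α M + α N = k := fun M N hMN => by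
    obtain ⟨e, he⟩ := exists_weight_eq_add hc hMN
    obtain ⟨k, -, hk⟩ := hpos e
    exact ⟨k, by rw [← he, hk, Int.cast_natCast]⟩
  let P (i : Fin 6) : {M // Petersen.IsPMFinset M} :=
    ⟨petersenMatching i, isPMFinset_petersenMatching i⟩
  have hP : Function.Injective P := fun i j h => petersenMatching_injective (congrArg Subtype.val h)
  exact ⟨hnonneg, int_or_half_int_of_add_int (hP.ne (by decide : (0 : Fin 6) ≠ 1))
    (hP.ne (by decide : (0 : Fin 6) ≠ 2)) (hP.ne (by decide : (1 : Fin 6) ≠ 2)) hpair⟩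
end
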